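/- Let K_1, ..., K_d be a well separated family of convex bodies in R^d, let a_i ∈ K_i and b_i ∈ K_i for each i, and suppose all points a_1, ..., a_d, b_1, ..., b_d lie on a common hyperplane H. Then the unit normal vector v(a_1, ..., a_d) determined by the orientation condition det[(v, 0); (a_1, 1); ...; (a_d, 1)] > 0 equals v(b_1, ..., b_d). -/

import Mathlib

/-!
All the points lie on the hyperplane `H`, and the `a i` (as well as the `b i`) span it, so `v`
and `u` are both unit normals of `H` and `v = ± u`. To exclude `v = -u`, move each `a i` to
`b i` along a segment: it stays in the convex set `K i` and in `H`, so by well-separatedness the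
moving points remain affinely independent and remain orthogonal to `v`. Hence the orientation
determinant `det (liftedMat d v ·)` never vanishes along the way, and by the intermediate value
theorem it has the same sign at `b` as at `a`, whereas `v = -u` would flip it.
-/

open Set

/-- The `(d+1) × (d+1)` matrix whose columns are `(v, 0), (a 0, 1), …, (a (d-1), 1)`. -/
noncomputable def liftedMat (d : ℕ) (v : EuclideanSpace ℝ (Fin d))
    (a : Fin d → EuclideanSpace ℝ (Fin d)) : Matrix (Fin (d + 1)) (Fin (d + 1)) ℝ :=
  Matrix.of fun i j =>
    Fin.lastCases (Fin.cases (0 : ℝ) (fun _ => (1 : ℝ)) j)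
      (fun i' => Fin.cases (v i') (fun j' => a j' i') j) i

/-- `v` is the orientation-normalized unit normal to the affine hull of `a 0, …, a (d-1)`:
it is a unit vector, orthogonal to all differences of the points, and the simplex with
vertices `v + a 0, a 0, …, a (d-1)` is positively oriented. -/
noncomputable def OrientedNormal (d : ℕ) (v : EuclideanSpace ℝ (Fin d))
    (a : Fin d → EuclideanSpace ℝ (Fin d)) : Prop :=
  ‖v‖ = 1 ∧ (∀ i j, (inner ℝ (a i - a j) v : ℝ) = 0) ∧ 0 < (liftedMat d v a).det

/-- The family `K` is well separated: any points chosen from the convex hulls of at most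
`d + 1` of the members are affinely independent. -/
def WellSeparated (d : ℕ) {n : ℕ} (K : Fin n → Set (EuclideanSpace ℝ (Fin d))) : Prop :=
  ∀ s : Finset (Fin n), s.card ≤ d + 1 →
    ∀ x : Fin n → EuclideanSpace ℝ (Fin d),
      (∀ i ∈ s, x i ∈ convexHull ℝ (K i)) →
      AffineIndependent ℝ (fun i : s => x i)

open Matrix AffineMap

section Orthogonal

variable {E : Type*} [NormedAddCommGroup E] [InnerProductSpace ℝ E]

lemma inner_sub_eq_zero_of_forall_inner_eq {ι : Type*} {x : ι → E} {w : E} {c : ℝ}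
    (h : ∀ i, (inner ℝ (x i) w : ℝ) = c) (i j : ι) : (inner ℝ (x i - x j) w : ℝ) = 0 := by
  rw [inner_sub_left, h, h, sub_self]

lemma mem_orthogonal_vectorSpan_range {ι : Type*} {x : ι → E} {y : E}
    (h : ∀ i j, (inner ℝ (x i - x j) y : ℝ) = 0) :
    y ∈ (vectorSpan ℝ (range x))ᗮ := by
  refine (Submodule.isOrtho_span.2 ?_).ge (Submodule.mem_span_singleton_self y)
  rintro _ ⟨_, ⟨i, rfl⟩, _, ⟨j, rfl⟩, rfl⟩ _ rfl
  exact h i j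

/-- The affine span of `finrank E` affinely independent points is a hyperplane, whose normals
form a line. -/
lemma exists_eq_smul_of_inner_sub_eq_zero [FiniteDimensional ℝ E] {ι : Type*} [Fintype ι]
    (hcard : Fintype.card ι = Module.finrank ℝ E) {x : ι → E} (hx : AffineIndependent ℝ x)
    {w z : E} (hw : w ≠ 0) (hxw : ∀ i j, (inner ℝ (x i - x j) w : ℝ) = 0)
    (hxz : ∀ i j, (inner ℝ (x i - x j) z : ℝ) = 0) : ∃ r : ℝ, z = r • w := by
  obtain ⟨n, hn⟩ : ∃ n, Fintype.card ι = n + 1 :=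
    Nat.exists_eq_succ_of_ne_zero (hcard ▸ Module.finrank_pos_iff_exists_ne_zero.2 ⟨w, hw⟩).ne'
  have hN : Module.finrank ℝ (vectorSpan ℝ (range x))ᗮ = 1 := by
    have := (vectorSpan ℝ (range x)).finrank_add_finrank_orthogonal
    rw [hx.finrank_vectorSpan hn] at this
    omega
  obtain ⟨r, hr⟩ := exists_smul_eq_of_finrank_eq_one hN
    (x := ⟨w, mem_orthogonal_vectorSpan_range hxw⟩) (by simpa using hw)
    ⟨z, mem_orthogonal_vectorSpan_range hxz⟩
  exact ⟨r, (congrArg Subtype.val hr).symm⟩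

end Orthogonal

lemma WellSeparated.affineIndependent {d n : ℕ} {K : Fin n → Set (EuclideanSpace ℝ (Fin d))}
    (hK : WellSeparated d K) (hn : n ≤ d + 1) {x : Fin n → EuclideanSpace ℝ (Fin d)}
    (hx : ∀ i, x i ∈ convexHull ℝ (K i)) : AffineIndependent ℝ x :=
  (affineIndependent_equiv (Equiv.subtypeUnivEquiv Finset.mem_univ)).1
    (hK Finset.univ (by simpa using hn) x fun i _ => hx i)

section LiftedMat

variable {d : ℕ}

lemma liftedMat_mulVec_eq_zero_iff (v : EuclideanSpace ℝ (Fin d))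
    (x : Fin d → EuclideanSpace ℝ (Fin d)) (g : Fin (d + 1) → ℝ) :
    liftedMat d v x *ᵥ g = 0 ↔
      ∑ j : Fin d, g j.succ = 0 ∧ g 0 • v + ∑ j : Fin d, g j.succ • x j = 0 := by
  have hlast : (liftedMat d v x *ᵥ g) (Fin.last d) = ∑ j : Fin d, g j.succ := by
    simp [liftedMat, mulVec, dotProduct, Fin.sum_univ_succ]
  have hcast : ∀ i, (liftedMat d v x *ᵥ g) i.castSucc =
      (g 0 • v + ∑ j : Fin d, g j.succ • x j) i := by
    intro i
    simp [liftedMat, mulVec, dotProduct, Fin.sum_univ_succ, mul_comm]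
  rw [funext_iff, Fin.forall_fin_succ', and_comm, hlast]
  simp only [hcast, Pi.zero_apply]
  exact and_congr_right' ⟨fun h => PiLp.ext h, fun h i => by simp [h]⟩

lemma det_liftedMat_ne_zero {v : EuclideanSpace ℝ (Fin d)} (hv : v ≠ 0)
    {x : Fin d → EuclideanSpace ℝ (Fin d)} (hx : AffineIndependent ℝ x)
    (hxv : ∀ i j, (inner ℝ (x i - x j) v : ℝ) = 0) :
    (liftedMat d v x).det ≠ 0 := by
  intro hdet
  obtain ⟨g, hg, hmul⟩ := exists_mulVec_eq_zero_iff.2 hdet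
  obtain ⟨hsum, hcomb⟩ := (liftedMat_mulVec_eq_zero_iff v x g).1 hmul
  have hxv_sum : ∑ j, g j.succ * (inner ℝ (x j) v : ℝ) = 0 := by
    rcases isEmpty_or_nonempty (Fin d) with _ | ⟨⟨k⟩⟩
    · simp
    · calc ∑ j, g j.succ * (inner ℝ (x j) v : ℝ) = ∑ j, g j.succ * (inner ℝ (x k) v : ℝ) :=
            Finset.sum_congr rfl fun j _ => by
              rw [← sub_eq_zero, ← mul_sub, ← inner_sub_left, hxv, mul_zero]
        _ = 0 := by rw [← Finset.sum_mul, hsum, zero_mul]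
  have hg0 : g 0 = 0 := by
    have h := congrArg (fun y => (inner ℝ y v : ℝ)) hcomb
    simp only [inner_add_left, sum_inner, real_inner_smul_left, hxv_sum, add_zero,
      inner_zero_left, real_inner_self_eq_norm_sq] at h
    simpa [hv] using h
  rw [hg0, zero_smul, zero_add] at hcomb
  have hgsucc := affineIndependent_iff.1 hx Finset.univ _ hsum hcomb
  exact hg (funext (Fin.cases hg0 fun j => hgsucc j (Finset.mem_univ j)))

lemma det_liftedMat_neg (v : EuclideanSpace ℝ (Fin d)) (x : Fin d → EuclideanSpace ℝ (Fin d)) :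
    (liftedMat d (-v) x).det = -(liftedMat d v x).det := by
  have h : liftedMat d (-v) x =
      (liftedMat d v x).updateCol 0 ((-1 : ℝ) • fun i => liftedMat d v x i 0) := by
    ext i j
    refine Fin.cases ?_ (fun j => ?_) j <;> refine Fin.lastCases ?_ (fun i => ?_) i <;>
      simp [liftedMat, Fin.succ_ne_zero]
  rw [h, det_updateCol_smul, updateCol_eq_self, neg_one_mul]

lemma Continuous.liftedMat {X : Type*} [TopologicalSpace X] (v : EuclideanSpace ℝ (Fin d))
    {x : X → Fin d → EuclideanSpace ℝ (Fin d)} (hx : Continuous x) :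
    Continuous fun t => liftedMat d v (x t) := by
  refine continuous_matrix fun i j => Fin.lastCases ?_ (fun i => ?_) i
  · simpa [_root_.liftedMat] using continuous_const
  · refine Fin.cases ?_ (fun j => ?_) j
    · simpa [_root_.liftedMat] using continuous_const
    · simp only [_root_.liftedMat, of_apply, Fin.lastCases_castSucc, Fin.cases_succ]
      exact (EuclideanSpace.proj i).continuous.comp ((continuous_apply j).comp hx)

end LiftedMat

lemma WellSeparated.det_liftedMat_pos_of_pos {d : ℕ} {K : Fin d → Set (EuclideanSpace ℝ (Fin d))}
    (hK : WellSeparated d K) {a b : Fin d → EuclideanSpace ℝ (Fin d)}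
    (ha : ∀ i, a i ∈ convexHull ℝ (K i)) (hb : ∀ i, b i ∈ convexHull ℝ (K i))
    {v : EuclideanSpace ℝ (Fin d)} (hv : v ≠ 0) {c : ℝ}
    (hplane : ∀ i, (inner ℝ (a i) v : ℝ) = c ∧ (inner ℝ (b i) v : ℝ) = c)
    (hpos : 0 < (liftedMat d v a).det) : 0 < (liftedMat d v b).det := by
  by_contra! hneg
  set x : ℝ → Fin d → EuclideanSpace ℝ (Fin d) := fun t i => lineMap (a i) (b i) t
  have hcont : Continuous fun t => (liftedMat d v (x t)).det :=
    ((continuous_pi fun i => lineMap_continuous).liftedMat v).matrix_det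
  obtain ⟨t, ht, hzero⟩ := intermediate_value_Icc' zero_le_one hcont.continuousOn
    (show (0 : ℝ) ∈ Icc _ _ by simpa [x] using And.intro hneg hpos.le)
  have hxK : ∀ i, x t i ∈ convexHull ℝ (K i) := fun i =>
    (convex_convexHull ℝ (K i)).lineMap_mem (ha i) (hb i) ht
  have hxv : ∀ i, (inner ℝ (x t i) v : ℝ) = c := fun i => by
    simp [x, lineMap_apply, inner_add_left, inner_smul_left, inner_sub_left, hplane i]
  exact det_liftedMat_ne_zero hv (hK.affineIndependent (by omega) hxK)
    (inner_sub_eq_zero_of_forall_inner_eq hxv) hzero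

theorem stmt1_general (d : ℕ) (K : Fin d → Set (EuclideanSpace ℝ (Fin d)))
    (hws : WellSeparated d K)
    (a b : Fin d → EuclideanSpace ℝ (Fin d))
    (ha : ∀ i, a i ∈ K i) (hb : ∀ i, b i ∈ K i)
    (w : EuclideanSpace ℝ (Fin d)) (c : ℝ) (hw : w ≠ 0)
    (hplane : ∀ i, (inner ℝ (a i) w : ℝ) = c ∧ (inner ℝ (b i) w : ℝ) = c)
    (v u : EuclideanSpace ℝ (Fin d))
    (hv : OrientedNormal d v a) (hu : OrientedNormal d u b) : v = u := by
  obtain ⟨hv_norm, hva, hv_det⟩ := hv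
  obtain ⟨hu_norm, hub, hu_det⟩ := hu
  have hv0 : v ≠ 0 := by rintro rfl; simp at hv_norm
  have hcard : Fintype.card (Fin d) = Module.finrank ℝ (EuclideanSpace ℝ (Fin d)) := by simp
  have haK : ∀ i, a i ∈ convexHull ℝ (K i) := fun i => subset_convexHull ℝ _ (ha i)
  have hbK : ∀ i, b i ∈ convexHull ℝ (K i) := fun i => subset_convexHull ℝ _ (hb i)
  obtain ⟨r, rfl⟩ := exists_eq_smul_of_inner_sub_eq_zero hcard
    (hws.affineIndependent (by omega) haK) hw
    (inner_sub_eq_zero_of_forall_inner_eq fun i => (hplane i).1) hva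
  have hplane_v : ∀ i, (inner ℝ (a i) (r • w) : ℝ) = r * c ∧ (inner ℝ (b i) (r • w) : ℝ) = r * c :=
    fun i => by simp only [real_inner_smul_right, hplane i, and_self]
  obtain ⟨s, rfl⟩ := exists_eq_smul_of_inner_sub_eq_zero hcard
    (hws.affineIndependent (by omega) hbK) hv0
    (inner_sub_eq_zero_of_forall_inner_eq fun i => (hplane_v i).2) hub
  have hs : |s| = 1 := by rwa [norm_smul, hv_norm, mul_one, Real.norm_eq_abs] at hu_norm
  rcases (abs_eq zero_le_one).1 hs with rfl | rfl
  · rw [one_smul]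
  · have := hws.det_liftedMat_pos_of_pos haK hbK hv0 hplane_v hv_det
    rw [neg_one_smul, det_liftedMat_neg] at hu_det
    linarith

theorem stmt1 (d : ℕ) (K : Fin d → Set (EuclideanSpace ℝ (Fin d)))
    (hbody : ∀ i, IsCompact (K i) ∧ Convex ℝ (K i) ∧ (interior (K i)).Nonempty)
    (hws : WellSeparated d K)
    (a b : Fin d → EuclideanSpace ℝ (Fin d))
    (ha : ∀ i, a i ∈ K i) (hb : ∀ i, b i ∈ K i)
    (w : EuclideanSpace ℝ (Fin d)) (c : ℝ) (hw : w ≠ 0)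
    (hplane : ∀ i, (inner ℝ (a i) w : ℝ) = c ∧ (inner ℝ (b i) w : ℝ) = c)
    (v u : EuclideanSpace ℝ (Fin d))
    (hv : OrientedNormal d v a) (hu : OrientedNormal d u b) : v = u :=
  stmt1_general d K hws a b ha hb w c hw hplane v u hv hu
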